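/- arXiv:1108.4436 — 3 statements merged into one kernel-verified Lean document; each statement's English description precedes it below -/
import Mathlib

section
/- In the reduction from Hitting Set, if X' ⊆ X is a hitting set of size at most k for the collection S, then the constructed list of partial votes V^p can be extended to linear votes in which every candidate x_i takes at least one last position, every candidate x_i^j takes at most one first position, every y_i^j and z_i^j takes exactly as many first positions as last positions, and consequently no candidate exceeds their maximum partial score with respect to c. -/
/-- Candidates of the reduction from Hitting Set with `m` elements and `n` sets. -/
inductive Cand (m n : ℕ) where
  | c | h
  | x (i : Fin m)
  | xx (i : Fin m) (j : Fin n)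
  | y (i : Fin m) (j : Fin n)
  | z (i : Fin m) (j : Fin n)
  deriving DecidableEq, Fintype

/-- Index type for the partial votes `V^p = V_1^p ∪ V_2^p ∪ V_3^p`. -/
inductive Idx (m n k : ℕ) where
  | one (a : Fin k)              -- the k votes of V_1^p
  | v (i : Fin m)                -- votes v_i
  | vij (i : Fin m) (j : Fin n)  -- votes v_i^j
  | wij (i : Fin m) (j : Fin n)  -- votes w_i^j
  | t (j : Fin n)                -- votes of V_3^p
  deriving DecidableEq, Fintype

/-- Three-tier partial order `T ≻ middle ≻ B`, with the candidates in `E`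
left unconstrained. -/
def tierE {C : Type*} [DecidableEq C] (T B E : Finset C) : C → C → Prop :=
  fun a b => a ∉ E ∧ b ∉ E ∧ ((a ∈ T ∧ b ∉ T) ∨ (b ∈ B ∧ a ∉ B))

/-- The partial votes of the reduction from the Hitting Set instance
`(X = Fin m, S, k)`. -/
def pvote (m n k : ℕ) (hn : 0 < n) (S : Fin n → Finset (Fin m)) :
    Idx m n k → Cand m n → Cand m n → Prop
  | .one _ => tierE {Cand.h} (Finset.univ.image Cand.x) ∅
  | .v i => tierE {Cand.h} {Cand.x i, Cand.y i ⟨0, hn⟩} ∅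
  | .vij i j => tierE {Cand.y i j} {Cand.h} {Cand.z i j}
  | .wij i j =>
      if hj : j.val + 1 < n then
        tierE {Cand.xx i j} {Cand.y i ⟨j.val + 1, hj⟩} {Cand.z i j}
      else
        tierE {Cand.xx i j} {Cand.h} {Cand.z i j}
  | .t j => tierE ((S j).image fun i => Cand.xx i j) {Cand.h} ∅

/-- A ranking of the candidates (position `0` is first, the largest is last). -/
abbrev Ranking (m n : ℕ) := Cand m n ≃ Fin (Fintype.card (Cand m n))

/-- Points for position `p` under the scoring rule `(2,1,...,1,0)`. -/
def pts (M : ℕ) (p : Fin M) : ℕ :=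
  if p.val = 0 then 2 else if p.val = M - 1 then 0 else 1

/-- An assignment of rankings extends the partial votes of the reduction. -/
def ExtendsRed (m n k : ℕ) (hn : 0 < n) (S : Fin n → Finset (Fin m))
    (Ext : Idx m n k → Ranking m n) : Prop :=
  ∀ idx a b, pvote m n k hn S idx a b → Ext idx a < Ext idx b

/-- Score of candidate `d` from the extended partial votes under `(2,1,...,1,0)`. -/
def pScore {m n k : ℕ} (Ext : Idx m n k → Ranking m n) (d : Cand m n) : ℕ :=
  ∑ idx : Idx m n k, pts _ (Ext idx d)

/-- Number of extended partial votes that rank `d` first. -/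
def firstCnt {m n k : ℕ} (Ext : Idx m n k → Ranking m n) (d : Cand m n) : ℕ :=
  (Finset.univ.filter fun idx : Idx m n k => (Ext idx d).val = 0).card

/-- Number of extended partial votes that rank `d` last. -/
def lastCnt {m n k : ℕ} (Ext : Idx m n k → Ranking m n) (d : Cand m n) : ℕ :=
  (Finset.univ.filter fun idx : Idx m n k =>
    (Ext idx d).val = Fintype.card (Cand m n) - 1).card

/-- No candidate exceeds its maximum partial score with respect to `c`:
`s(x_i) = |V^p| - 1`, `s(x_i^j) = |V^p| + 1`, `s(y_i^j) = s(z_i^j) = |V^p|`,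
`s(h) ≥ 2|V^p|`. -/
def WithinBounds {m n k : ℕ} (Ext : Idx m n k → Ranking m n) : Prop :=
  (∀ i, pScore Ext (Cand.x i) ≤ Fintype.card (Idx m n k) - 1) ∧
  (∀ i j, pScore Ext (Cand.xx i j) ≤ Fintype.card (Idx m n k) + 1) ∧
  (∀ i j, pScore Ext (Cand.y i j) ≤ Fintype.card (Idx m n k)) ∧
  (∀ i j, pScore Ext (Cand.z i j) ≤ Fintype.card (Idx m n k)) ∧
  pScore Ext Cand.h ≤ 2 * Fintype.card (Idx m n k)

/-!
Every partial vote is a three-tier order `T ≻ (middle) ≻ B` leaving a set `E` free, so it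
extends to a ranking with any prescribed first candidate from `T ∪ E` and last candidate
from `B ∪ E`. Walk along each chain `v_i, v_i^1, w_i^1, v_i^2, …, w_i^n`: if `e_i ∈ X'`,
`y_i^j` heads `v_i^j` and `z_i^j` heads `w_i^j`, each being last in the preceding vote; if
`e_i ∉ X'`, `z_i^j` heads `v_i^j` and is last in `w_i^j`, `x_i^j` heads `w_i^j`, and `x_i`
is last in `v_i`. Each `T_j` is headed by `x_{r j}^j` for some `r j ∈ X' ∩ S_j`, and as
`|X'| ≤ k` the votes of `V_1^p` can put every `x_i` with `e_i ∈ X'` last. Under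
`(2,1,…,1,0)` a candidate scores `|V^p| + #first − #last`, which gives the bounds.
-/

open Finset

section Ranking

variable {α : Type*} [Fintype α]

lemma exists_ranking_of_key (κ : α → ℕ) :
    ∃ e : α ≃ Fin (Fintype.card α), ∀ a b, κ a < κ b → e a < e b := by
  let key : α → ℕ ×ₗ Fin (Fintype.card α) := fun a => toLex (κ a, Fintype.equivFin α a)
  have key_injective : Function.Injective key := fun a b h =>
    (Fintype.equivFin α).injective (congrArg (fun p => (ofLex p).2) h)
  let _ : LinearOrder α := LinearOrder.lift' key key_injective
  exact ⟨(monoEquivOfFin α rfl).symm.toEquiv, fun a b h =>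
    (monoEquivOfFin α rfl).symm.strictMono (Prod.Lex.toLex_lt_toLex.mpr (Or.inl h))⟩

lemma val_eq_zero_iff_of_forall_lt {e : α ≃ Fin (Fintype.card α)} {a : α}
    (ha : ∀ b, b ≠ a → e a < e b) (b : α) : (e b).val = 0 ↔ b = a := by
  refine ⟨fun hb => ?_, ?_⟩
  · by_contra hne
    have := ha b hne
    simp [Fin.lt_def, hb] at this
  · rintro rfl
    obtain ⟨c, hc⟩ := e.surjective ⟨0, Fintype.card_pos_iff.mpr ⟨b⟩⟩
    by_contra h0
    have := ha c (by rintro rfl; simp [hc] at h0)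
    simp [hc, Fin.lt_def] at this

lemma val_eq_card_sub_one_iff_of_forall_lt {e : α ≃ Fin (Fintype.card α)} {a : α}
    (ha : ∀ b, b ≠ a → e b < e a) (b : α) :
    (e b).val = Fintype.card α - 1 ↔ b = a := by
  have hlt := (e a).isLt
  refine ⟨fun hb => ?_, ?_⟩
  · by_contra hne
    have := ha b hne
    simp [Fin.lt_def, hb] at this
    omega
  · rintro rfl
    obtain ⟨c, hc⟩ := e.surjective ⟨Fintype.card α - 1, by omega⟩
    by_contra hlast
    have := ha c (by rintro rfl; simp [hc] at hlast)
    simp [hc, Fin.lt_def] at this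
    omega

lemma exists_ranking_tierE [DecidableEq α] {T B E : Finset α} {F L : α}
    (hTB : Disjoint T B) (hF : F ∈ T ∪ E) (hL : L ∈ B ∪ E) (hFL : F ≠ L) :
    ∃ e : α ≃ Fin (Fintype.card α), (∀ a b, tierE T B E a b → e a < e b) ∧
      (∀ d, (e d).val = 0 ↔ d = F) ∧ (∀ d, (e d).val = Fintype.card α - 1 ↔ d = L) := by
  let κ : α → ℕ := fun d =>
    if d = F then 0 else if d = L then 4 else if d ∈ T then 1 else if d ∈ B then 3 else 2
  obtain ⟨e, he⟩ := exists_ranking_of_key κ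
  have hFκ : ∀ d, d ≠ F → κ F < κ d := by intro d hd; simp [κ, hd]; split_ifs <;> omega
  have hLκ : ∀ d, d ≠ L → κ d < κ L := by intro d hd; simp [κ, hd, hFL.symm]; split_ifs <;> omega
  refine ⟨e, fun a b hab => he a b ?_, val_eq_zero_iff_of_forall_lt fun d hd => he _ _ (hFκ d hd),
    val_eq_card_sub_one_iff_of_forall_lt fun d hd => he _ _ (hLκ d hd)⟩
  have hTB' := Finset.disjoint_left.mp hTB
  obtain ⟨haE, hbE, ⟨haT, hbT⟩ | ⟨hbB, haB⟩⟩ := hab <;> simp only [κ] <;> split_ifs <;> simp_all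

end Ranking

lemma Finset.exists_subset_range_fin_of_card_le {β : Type*} {X : Finset β} {k : ℕ}
    (hX : X.Nonempty) (hk : X.card ≤ k) : ∃ τ : Fin k → β, (X : Set β) ⊆ Set.range τ := by
  obtain ⟨g⟩ : Nonempty (X ↪ Fin k) := Function.Embedding.nonempty_of_card_le (by simpa using hk)
  have : Nonempty X := hX.to_subtype
  exact ⟨fun a => ((Function.invFun (⇑g) a : X) : β), fun i hi =>
    ⟨g ⟨i, hi⟩, by simp [Function.leftInverse_invFun g.injective _]⟩⟩

section Scores

variable {m n k : ℕ}

lemma pScore_add_lastCnt (Ext : Idx m n k → Ranking m n) (d : Cand m n) :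
    pScore Ext d + lastCnt Ext d = Fintype.card (Idx m n k) + firstCnt Ext d := by
  have hcard : 1 < Fintype.card (Cand m n) :=
    Fintype.one_lt_card_iff_nontrivial.mpr ⟨⟨.c, .h, by simp⟩⟩
  have hIdx : Fintype.card (Idx m n k) = ∑ _idx : Idx m n k, 1 := by simp
  simp only [pScore, lastCnt, firstCnt, card_filter, hIdx, ← sum_add_distrib]
  refine sum_congr rfl fun idx _ => ?_
  have := (Ext idx d).isLt
  unfold pts
  split_ifs <;> omega

lemma withinBounds_of_counts {Ext : Idx m n k → Ranking m n}
    (hx_first : ∀ i, firstCnt Ext (Cand.x i) = 0) (hx_last : ∀ i, 1 ≤ lastCnt Ext (Cand.x i))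
    (hxx : ∀ i j, firstCnt Ext (Cand.xx i j) ≤ 1)
    (hy : ∀ i j, firstCnt Ext (Cand.y i j) = lastCnt Ext (Cand.y i j))
    (hz : ∀ i j, firstCnt Ext (Cand.z i j) = lastCnt Ext (Cand.z i j)) :
    WithinBounds Ext := by
  have key := pScore_add_lastCnt Ext
  refine ⟨fun i => ?_, fun i j => ?_, fun i j => ?_, fun i j => ?_, ?_⟩
  · have := key (.x i); have := hx_first i; have := hx_last i; omega
  · have := key (.xx i j); have := hxx i j; omega
  · have := key (.y i j); have := hy i j; omega
  · have := key (.z i j); have := hz i j; omega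
  · have := key .h
    have : firstCnt Ext .h ≤ Fintype.card (Idx m n k) := card_filter_le _ _
    omega

lemma firstCnt_eq_card {Ext : Idx m n k → Ranking m n} {F : Idx m n k → Cand m n}
    (hF : ∀ idx d, (Ext idx d).val = 0 ↔ d = F idx) (d : Cand m n) :
    firstCnt Ext d = #{idx | F idx = d} := by
  simp only [firstCnt, hF, eq_comm]

lemma lastCnt_eq_card {Ext : Idx m n k → Ranking m n} {L : Idx m n k → Cand m n}
    (hL : ∀ idx d, (Ext idx d).val = Fintype.card (Cand m n) - 1 ↔ d = L idx) (d : Cand m n) :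
    lastCnt Ext d = #{idx | L idx = d} := by
  simp only [lastCnt, hL, eq_comm]

end Scores

section Extension

variable {m n k : ℕ} (X' : Finset (Fin m))

def firstCand (r : Fin n → Fin m) : Idx m n k → Cand m n
  | .one _ | .v _ => .h
  | .vij i j => if i ∈ X' then .y i j else .z i j
  | .wij i j => if i ∈ X' then .z i j else .xx i j
  | .t j => .xx (r j) j

def lastCand (hn : 0 < n) (τ : Fin k → Fin m) : Idx m n k → Cand m n
  | .one a => .x (τ a)
  | .v i => if i ∈ X' then .y i ⟨0, hn⟩ else .x i
  | .vij i j => if i ∈ X' then .z i j else .h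
  | .wij i j =>
      if i ∈ X' then (if hj : j.val + 1 < n then .y i ⟨j.val + 1, hj⟩ else .h) else .z i j
  | .t _ => .h

lemma pvote_eq_tierE_compatible (hn : 0 < n) (S : Fin n → Finset (Fin m)) {r : Fin n → Fin m}
    (hr : ∀ j, r j ∈ S j) (τ : Fin k → Fin m) (idx : Idx m n k) :
    ∃ T B E, pvote m n k hn S idx = tierE T B E ∧ Disjoint T B ∧
      firstCand X' r idx ∈ T ∪ E ∧ lastCand X' hn τ idx ∈ B ∪ E ∧
      firstCand X' r idx ≠ lastCand X' hn τ idx := by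
  cases idx with
  | one a => exact ⟨_, _, _, rfl, by simp [firstCand, lastCand]⟩
  | v i => exact ⟨_, _, _, rfl, by by_cases hi : i ∈ X' <;> simp [firstCand, lastCand, hi]⟩
  | vij i j => exact ⟨_, _, _, rfl, by by_cases hi : i ∈ X' <;> simp [firstCand, lastCand, hi]⟩
  | wij i j =>
    by_cases hj : j.val + 1 < n
    · refine ⟨{.xx i j}, {.y i ⟨j + 1, hj⟩}, {.z i j}, by simp [pvote, hj], ?_⟩
      by_cases hi : i ∈ X' <;> simp [firstCand, lastCand, hi, hj]
    · refine ⟨{.xx i j}, {.h}, {.z i j}, by simp [pvote, hj], ?_⟩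
      by_cases hi : i ∈ X' <;> simp [firstCand, lastCand, hi, hj]
  | t j => exact ⟨_, _, _, rfl, by simp [firstCand, lastCand, hr]⟩

lemma card_firstCand_eq_x (r : Fin n → Fin m) (i : Fin m) :
    #{idx : Idx m n k | firstCand X' r idx = .x i} = 0 := by
  rw [card_eq_zero, filter_eq_empty_iff]
  rintro idx -
  cases idx <;> simp only [firstCand] <;> aesop

lemma card_lastCand_eq_x_pos (hn : 0 < n) {τ : Fin k → Fin m}
    (hτ : (X' : Set (Fin m)) ⊆ Set.range τ) (i : Fin m) :
    0 < #{idx : Idx m n k | lastCand X' hn τ idx = .x i} := by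
  rw [card_pos]
  by_cases hi : i ∈ X'
  · obtain ⟨a, rfl⟩ := hτ hi
    exact ⟨.one a, by rw [mem_filter]; simp [lastCand]⟩
  · exact ⟨.v i, by rw [mem_filter]; simp [lastCand, hi]⟩

lemma card_firstCand_eq_xx_le {r : Fin n → Fin m} (hr : ∀ j, r j ∈ X') (i : Fin m) (j : Fin n) :
    #{idx : Idx m n k | firstCand X' r idx = .xx i j} ≤ 1 := by
  have hfiber : ∀ idx : Idx m n k, firstCand X' r idx = .xx i j →
      idx = if i ∈ X' then .t j else .wij i j := by
    intro idx h
    cases idx <;> simp only [firstCand] at h <;> aesop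
  refine card_le_one.mpr fun a ha b hb => ?_
  rw [mem_filter] at ha hb
  rw [hfiber a ha.2, hfiber b hb.2]

lemma card_firstCand_eq_y (r : Fin n → Fin m) (i : Fin m) (j : Fin n) :
    #{idx : Idx m n k | firstCand X' r idx = .y i j} = if i ∈ X' then 1 else 0 := by
  have hfiber : ∀ idx : Idx m n k, firstCand X' r idx = .y i j ↔ i ∈ X' ∧ idx = .vij i j := by
    intro idx
    cases idx <;> simp only [firstCand] <;> aesop
  split_ifs with hi
  · exact card_eq_one.mpr ⟨.vij i j, by ext; simp [hfiber, hi]⟩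
  · simp [hfiber, hi]

/-- The vote preceding `v_i^j` in the chain `v_i, v_i^1, w_i^1, v_i^2, …, w_i^n`
(indices `j` start at `0`). -/
def chainPred (i : Fin m) (j : Fin n) : Idx m n k :=
  if hj : j.val = 0 then .v i else .wij i ⟨j.val - 1, by omega⟩

lemma card_lastCand_eq_y (hn : 0 < n) (τ : Fin k → Fin m) (i : Fin m) (j : Fin n) :
    #{idx : Idx m n k | lastCand X' hn τ idx = .y i j} = if i ∈ X' then 1 else 0 := by
  have hfiber : ∀ idx : Idx m n k,
      lastCand X' hn τ idx = .y i j ↔ i ∈ X' ∧ idx = chainPred i j := by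
    intro idx
    cases idx <;> simp only [lastCand, chainPred] <;> split_ifs <;> grind
  split_ifs with hi
  · exact card_eq_one.mpr ⟨chainPred i j, by ext; simp [hfiber, hi]⟩
  · simp [hfiber, hi]

lemma card_firstCand_eq_z (r : Fin n → Fin m) (i : Fin m) (j : Fin n) :
    #{idx : Idx m n k | firstCand X' r idx = .z i j} = 1 := by
  have hfiber : ∀ idx : Idx m n k,
      firstCand X' r idx = .z i j ↔ idx = if i ∈ X' then .wij i j else .vij i j := by
    intro idx
    cases idx <;> simp only [firstCand] <;> aesop
  exact card_eq_one.mpr ⟨if i ∈ X' then .wij i j else .vij i j, by ext; simp [hfiber]⟩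

lemma card_lastCand_eq_z (hn : 0 < n) (τ : Fin k → Fin m) (i : Fin m) (j : Fin n) :
    #{idx : Idx m n k | lastCand X' hn τ idx = .z i j} = 1 := by
  have hfiber : ∀ idx : Idx m n k,
      lastCand X' hn τ idx = .z i j ↔ idx = if i ∈ X' then .vij i j else .wij i j := by
    intro idx
    cases idx <;> simp only [lastCand] <;> aesop
  exact card_eq_one.mpr ⟨if i ∈ X' then .vij i j else .wij i j, by ext; simp [hfiber]⟩

end Extension

theorem hitting_set_gives_good_extension_general
    (m n k : ℕ) (hn : 0 < n) (S : Fin n → Finset (Fin m))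
    (X' : Finset (Fin m)) (hXk : X'.card ≤ k)
    (hhit : ∀ j, (X' ∩ S j).Nonempty) :
    ∃ Ext : Idx m n k → Ranking m n,
      ExtendsRed m n k hn S Ext ∧
      (∀ i, 1 ≤ lastCnt Ext (Cand.x i)) ∧
      (∀ i j, firstCnt Ext (Cand.xx i j) ≤ 1) ∧
      (∀ i j, firstCnt Ext (Cand.y i j) = lastCnt Ext (Cand.y i j)) ∧
      (∀ i j, firstCnt Ext (Cand.z i j) = lastCnt Ext (Cand.z i j)) ∧
      WithinBounds Ext := by
  obtain ⟨τ, hτ⟩ := exists_subset_range_fin_of_card_le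
    ((hhit ⟨0, hn⟩).mono inter_subset_left) hXk
  choose r hr using hhit
  have hrX : ∀ j, r j ∈ X' := fun j => (mem_inter.mp (hr j)).1
  have hrS : ∀ j, r j ∈ S j := fun j => (mem_inter.mp (hr j)).2
  choose Ext hExt hF hL using fun idx : Idx m n k =>
    have ⟨_, _, _, hpvote, hTB, hF, hL, hFL⟩ := pvote_eq_tierE_compatible X' hn S hrS τ idx
    hpvote ▸ exists_ranking_tierE hTB hF hL hFL
  have hx_last : ∀ i, 1 ≤ lastCnt Ext (.x i) := fun i => by
    rw [lastCnt_eq_card hL]; exact card_lastCand_eq_x_pos X' hn hτ i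
  have hxx : ∀ i j, firstCnt Ext (.xx i j) ≤ 1 := fun i j => by
    rw [firstCnt_eq_card hF]; exact card_firstCand_eq_xx_le X' hrX i j
  have hy : ∀ i j, firstCnt Ext (.y i j) = lastCnt Ext (.y i j) := fun i j => by
    rw [firstCnt_eq_card hF, lastCnt_eq_card hL, card_firstCand_eq_y, card_lastCand_eq_y]
  have hz : ∀ i j, firstCnt Ext (.z i j) = lastCnt Ext (.z i j) := fun i j => by
    rw [firstCnt_eq_card hF, lastCnt_eq_card hL, card_firstCand_eq_z, card_lastCand_eq_z]
  have hx_first : ∀ i, firstCnt Ext (.x i) = 0 := fun i => by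
    rw [firstCnt_eq_card hF, card_firstCand_eq_x]
  exact ⟨Ext, hExt, hx_last, hxx, hy, hz, withinBounds_of_counts hx_first hx_last hxx hy hz⟩

/-- Forward direction of the reduction: if `X'` is a hitting set of size at
most `k`, the partial votes can be extended so that every `x_i` takes at least
one last position, every `x_i^j` at most one first position, every `y_i^j` and
`z_i^j` exactly as many first as last positions, and no candidate exceeds its
maximum partial score with respect to `c`. -/
theorem hitting_set_gives_good_extension
    (m n k : ℕ) (hn : 0 < n) (S : Fin n → Finset (Fin m))
    (hS : ∀ j, (S j).Nonempty)
    (X' : Finset (Fin m)) (hXk : X'.card ≤ k)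
    (hhit : ∀ j, (X' ∩ S j).Nonempty) :
    ∃ Ext : Idx m n k → Ranking m n,
      ExtendsRed m n k hn S Ext ∧
      (∀ i, 1 ≤ lastCnt Ext (Cand.x i)) ∧
      (∀ i j, firstCnt Ext (Cand.xx i j) ≤ 1) ∧
      (∀ i j, firstCnt Ext (Cand.y i j) = lastCnt Ext (Cand.y i j)) ∧
      (∀ i j, firstCnt Ext (Cand.z i j) = lastCnt Ext (Cand.z i j)) ∧
      WithinBounds Ext :=
  hitting_set_gives_good_extension_general m n k hn S X' hXk hhit
end

section
/- In the reduction from Hitting Set, in any extension where no candidate exceeds their maximum partial score with respect to c, each candidate x_i must be ranked last in at least one extended vote; since x_i can be last only in votes of V_1^p or in v_i, and at most k indices i have x_i last in V_1^p, at least m − k of the candidates x_i are ranked last in their vote v_i. -/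
/-!
A candidate ranked above another one in an extended vote is not last. Under `(2,1,...,1,0)`
a candidate that is never last scores at least one point per vote, i.e. at least `|V^p|`,
which exceeds the bound `|V^p| - 1` on `x_i`; so every `x_i` is last somewhere. Every partial
vote other than those of `V_1^p` and `v_i` puts `x_i` above some candidate, and a vote of
`V_1^p` has a single last candidate, so at most `k` of the `x_i` are last outside their `v_i`.
-/

open Finset

lemma val_ne_card_sub_one_of_lt {α : Type*} [Fintype α] {e : α ≃ Fin (Fintype.card α)}
    {a b : α} (h : e a < e b) : (e a).val ≠ Fintype.card α - 1 := by
  have : (e b).val < Fintype.card α := (e b).isLt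
  have : (e a).val < (e b).val := h
  omega

lemma one_le_pts {M : ℕ} {p : Fin M} (hp : p.val ≠ M - 1) : 1 ≤ pts M p := by
  unfold pts
  split_ifs <;> omega

lemma exists_val_eq_sub_one_of_sum_pts_lt {ι : Type*} [Fintype ι] {M : ℕ} (p : ι → Fin M)
    (h : ∑ a, pts M (p a) < Fintype.card ι) : ∃ a, (p a).val = M - 1 := by
  by_contra! hp
  have : Fintype.card ι ≤ ∑ a, pts M (p a) := by
    simpa using Finset.sum_le_sum fun a (_ : a ∈ univ) => one_le_pts (hp a)
  omega

lemma card_filter_exists_eq_le {ι α β : Type*} [Fintype ι] [Fintype α] [DecidableEq α]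
    [DecidableEq β] (f : ι → α → β) (hf : ∀ a, (f a).Injective) (b : β)
    [DecidablePred fun d => ∃ a, f a d = b] :
    #{d | ∃ a, f a d = b} ≤ Fintype.card ι := by
  calc #{d | ∃ a, f a d = b}
      ≤ #(univ.biUnion fun a => ({d | f a d = b} : Finset α)) :=
        card_le_card fun d hd => by simpa using hd
    _ ≤ #(univ : Finset ι) * 1 :=
        card_biUnion_le_card_mul _ _ _ fun a _ => card_le_one.mpr fun d hd d' hd' =>
          hf a ((mem_filter.mp hd).2.trans (mem_filter.mp hd').2.symm)
    _ = Fintype.card ι := by simp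

section Reduction

variable {m n k : ℕ} {hn : 0 < n} {S : Fin n → Finset (Fin m)}

lemma exists_pvote_x (i : Fin m) (idx : Idx m n k) (hone : ∀ a, idx ≠ .one a)
    (hv : idx ≠ .v i) : ∃ b, pvote m n k hn S idx (Cand.x i) b := by
  cases idx with
  | one a => exact absurd rfl (hone a)
  | v i' =>
    have hii : i ≠ i' := fun h => hv (h ▸ rfl)
    exact ⟨Cand.x i', by simp [pvote, tierE, hii]⟩
  | vij i' j => exact ⟨Cand.h, by simp [pvote, tierE]⟩
  | wij i' j =>
    by_cases hj : j.val + 1 < n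
    · exact ⟨Cand.y i' ⟨j.val + 1, hj⟩, by simp [pvote, hj, tierE]⟩
    · exact ⟨Cand.h, by simp [pvote, hj, tierE]⟩
  | t j => exact ⟨Cand.h, by simp [pvote, tierE]⟩

lemma eq_v_or_eq_one_of_x_last {Ext : Idx m n k → Ranking m n}
    (hext : ExtendsRed m n k hn S Ext) {i : Fin m} {idx : Idx m n k}
    (hlast : (Ext idx (Cand.x i)).val = Fintype.card (Cand m n) - 1) :
    idx = .v i ∨ ∃ a, idx = .one a := by
  by_contra! h
  obtain ⟨b, hb⟩ := exists_pvote_x (hn := hn) (S := S) i idx (fun a => h.2 a) h.1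
  exact val_ne_card_sub_one_of_lt (hext idx _ _ hb) hlast

end Reduction

/-- In any extension respecting the maximum partial scores, every candidate
`x_i` takes at least one last position; since `x_i` can be last only in `V_1^p`
or in `v_i` and at most `k` of them are last in `V_1^p`, at least `m - k` of
the candidates `x_i` are ranked last in their vote `v_i`. -/
theorem at_least_m_sub_k_x_last_in_v
    (m n k : ℕ) (hn : 0 < n) (S : Fin n → Finset (Fin m))
    (Ext : Idx m n k → Ranking m n)
    (hext : ExtendsRed m n k hn S Ext)
    (hbounds : WithinBounds Ext) :
    (∀ i : Fin m, ∃ idx : Idx m n k,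
        (Ext idx (Cand.x i)).val = Fintype.card (Cand m n) - 1) ∧
    m - k ≤ (Finset.univ.filter fun i : Fin m =>
        (Ext (Idx.v i) (Cand.x i)).val = Fintype.card (Cand m n) - 1).card := by
  set last := Fintype.card (Cand m n) - 1
  have hx_last (i : Fin m) : ∃ idx, (Ext idx (Cand.x i)).val = last := by
    apply exists_val_eq_sub_one_of_sum_pts_lt
    have hpos : 0 < Fintype.card (Idx m n k) := Fintype.card_pos_iff.mpr ⟨.v i⟩
    have := hbounds.1 i
    unfold pScore at this
    omega
  refine ⟨hx_last, ?_⟩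
  have hnot_v : #{i | ¬(Ext (.v i) (Cand.x i)).val = last} ≤ k := calc
    _ ≤ #{i | ∃ a : Fin k, (Ext (.one a) (Cand.x i)).val = last} := by
      refine card_le_card fun i hi => ?_
      obtain ⟨idx, hidx⟩ := hx_last i
      rcases eq_v_or_eq_one_of_x_last hext hidx with rfl | ⟨a, rfl⟩
      · exact absurd hidx (mem_filter.mp hi).2
      · exact mem_filter.mpr ⟨mem_univ i, a, hidx⟩
    _ ≤ Fintype.card (Fin k) := card_filter_exists_eq_le (fun a i => (Ext (.one a) (Cand.x i)).val)
        (fun a _ _ h => Cand.x.inj ((Ext (.one a)).injective (Fin.ext h))) last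
    _ = k := Fintype.card_fin k
  have := card_filter_add_card_filter_not (s := univ)
    fun i : Fin m => (Ext (.v i) (Cand.x i)).val = last
  simp only [card_univ, Fintype.card_fin] at this
  omega
end

section
/- In the forward direction of the reduction, under the exhibited extension, every candidate z_i^j receives exactly |V^p| points: z_i^j takes exactly one first position and one last position (in votes v_i^j and w_i^j when e_i ∈ X', or in w_i^j and v_i^j respectively when e_i ∉ X') and middle positions in all other votes. -/
section Ranking

variable {α : Type*}

theorem val_eq_zero_iff_forall_lt {N : ℕ} (r : α ≃ Fin N) (a : α) :
    (r a).val = 0 ↔ ∀ b ≠ a, r a < r b := by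
  refine ⟨fun h b hb => ?_, fun h => ?_⟩
  · have hne : (r b).val ≠ (r a).val := Fin.val_ne_of_ne (r.injective.ne hb)
    rw [Fin.lt_def]
    omega
  · by_contra hne
    have hlt := h (r.symm ⟨0, (r a).pos⟩) fun he => hne (by rw [← he]; simp)
    simp [Fin.lt_def] at hlt

theorem val_eq_last_iff_forall_lt {N : ℕ} (r : α ≃ Fin N) (a : α) :
    (r a).val = N - 1 ↔ ∀ b ≠ a, r b < r a := by
  have hN := (r a).isLt
  refine ⟨fun h b hb => ?_, fun h => ?_⟩
  · have hne : (r b).val ≠ (r a).val := Fin.val_ne_of_ne (r.injective.ne hb)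
    have := (r b).isLt
    rw [Fin.lt_def]
    omega
  · by_contra hne
    have hlt := h (r.symm ⟨N - 1, by omega⟩) fun he => hne (by rw [← he]; simp)
    simp only [Equiv.apply_symm_apply, Fin.lt_def] at hlt
    omega

variable [Fintype α] {β : Type*} [LinearOrder β]

noncomputable def lexRank (κ : α → β) : α ≃ Fin (Fintype.card α) :=
  letI : LinearOrder α := LinearOrder.lift' (fun a => toLex (κ a, Fintype.equivFin α a))
    fun _ _ h => (Fintype.equivFin α).injective (Prod.ext_iff.mp (toLex.injective h)).2
  (monoEquivOfFin α rfl).symm.toEquiv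

theorem lexRank_lt_of_lt (κ : α → β) {a b : α} (h : κ a < κ b) : lexRank κ a < lexRank κ b := by
  let : LinearOrder α := LinearOrder.lift' (fun a => toLex (κ a, Fintype.equivFin α a))
    fun _ _ h => (Fintype.equivFin α).injective (Prod.ext_iff.mp (toLex.injective h)).2
  exact (monoEquivOfFin α rfl).symm.lt_iff_lt.mpr (Prod.Lex.toLex_lt_toLex.mpr (Or.inl h))

end Ranking

theorem sum_pts_eq_card {ι : Type*} [Fintype ι] [DecidableEq ι] {N : ℕ} (f : ι → Fin N)
    {a b : ι} (hab : a ≠ b) (hfirst : ∀ i, (f i).val = 0 ↔ i = a)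
    (hlast : ∀ i, (f i).val = N - 1 ↔ i = b) :
    ∑ i, pts N (f i) = Fintype.card ι := by
  have hpts (i : ι) :
      (pts N (f i) : ℤ) = 1 + (if i = a then 1 else 0) - (if i = b then 1 else 0) := by
    rcases eq_or_ne i a with rfl | ha
    · simp [pts, (hfirst i).2 rfl, hab]
    rcases eq_or_ne i b with rfl | hb
    · have h0 : N - 1 ≠ 0 := (hlast i).2 rfl ▸ (hfirst i).not.2 ha
      simp [pts, (hlast i).2 rfl, h0, ha]
    · simp [pts, (hfirst i).not.2 ha, (hlast i).not.2 hb, ha, hb]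
  zify
  simp [hpts, Finset.sum_add_distrib, Finset.sum_sub_distrib]

section TierLevel

variable {C : Type*} [DecidableEq C]

def tierLevel (T B : Finset C) (c d : C) : ℕ :=
  if d ∈ T then 1 else if d = c then 2 else if d ∈ B then 4 else 3

theorem tierLevel_mem_Icc (T B : Finset C) (c d : C) : tierLevel T B c d ∈ Finset.Icc 1 4 := by
  unfold tierLevel
  split_ifs <;> simp

theorem tierLevel_lt_of_tierE {T B E : Finset C} {c a b : C} (hTB : Disjoint T B) (hcB : c ∉ B)
    (h : tierE T B E a b) : tierLevel T B c a < tierLevel T B c b := by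
  obtain ⟨-, -, ⟨ha, hb⟩ | ⟨hb, ha⟩⟩ := h
  · simp only [tierLevel, ha, hb, if_true, if_false]
    split_ifs <;> omega
  · have hbT : b ∉ T := Finset.disjoint_right.mp hTB hb
    have hbc : b ≠ c := by rintro rfl; exact hcB hb
    simp only [tierLevel, ha, hb, hbT, hbc, if_true, if_false]
    split_ifs <;> omega

end TierLevel

section Extension

variable {m n k : ℕ} (hn : 0 < n) (S : Fin n → Finset (Fin m)) (X' : Finset (Fin m))

def pvoteTop : Idx m n k → Finset (Cand m n)
  | .one _ | .v _ => {Cand.h}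
  | .vij i j => {Cand.y i j}
  | .wij i j => {Cand.xx i j}
  | .t j => (S j).image fun i => Cand.xx i j

def pvoteBot : Idx m n k → Finset (Cand m n)
  | .one _ => Finset.univ.image Cand.x
  | .v i => {Cand.x i, Cand.y i ⟨0, hn⟩}
  | .vij _ _ => {Cand.h}
  | .wij i j => if hj : j.val + 1 < n then {Cand.y i ⟨j.val + 1, hj⟩} else {Cand.h}
  | .t _ => {Cand.h}

def pvoteFree : Idx m n k → Finset (Cand m n)
  | .vij i j | .wij i j => {Cand.z i j}
  | _ => ∅

theorem pvote_eq_tierE (idx : Idx m n k) :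
    pvote m n k hn S idx = tierE (pvoteTop S idx) (pvoteBot hn idx) (pvoteFree idx) := by
  cases idx <;> simp only [pvote, pvoteTop, pvoteBot, pvoteFree]
  split_ifs <;> rfl

theorem disjoint_pvoteTop_pvoteBot (idx : Idx m n k) :
    Disjoint (pvoteTop S idx) (pvoteBot hn idx) := by
  cases idx <;> simp [pvoteTop, pvoteBot]
  split_ifs <;> simp

theorem c_notMem_pvoteBot (idx : Idx m n k) : Cand.c ∉ pvoteBot hn idx := by
  cases idx <;> simp [pvoteBot]
  split_ifs <;> simp

theorem z_notMem_pvoteTop (idx : Idx m n k) (i : Fin m) (j : Fin n) :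
    Cand.z i j ∉ pvoteTop S idx := by
  cases idx <;> simp [pvoteTop]

theorem z_notMem_pvoteBot (idx : Idx m n k) (i : Fin m) (j : Fin n) :
    Cand.z i j ∉ pvoteBot hn idx := by
  cases idx <;> simp [pvoteBot]
  split_ifs <;> simp

theorem eq_of_mem_pvoteFree {idx : Idx m n k} {d : Cand m n} {i : Fin m} {j : Fin n}
    (hd : d ∈ pvoteFree idx) (hz : Cand.z i j ∈ pvoteFree idx) : d = Cand.z i j := by
  cases idx <;> simp_all [pvoteFree]

def zFirstVote (i : Fin m) (j : Fin n) : Idx m n k :=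
  if i ∈ X' then .wij i j else .vij i j

def zLastVote (i : Fin m) (j : Fin n) : Idx m n k :=
  if i ∈ X' then .vij i j else .wij i j

theorem zFirstVote_ne_zLastVote (i : Fin m) (j : Fin n) :
    (zFirstVote X' i j : Idx m n k) ≠ zLastVote X' i j := by
  unfold zFirstVote zLastVote
  split_ifs <;> simp

theorem z_mem_pvoteFree_iff (idx : Idx m n k) (i : Fin m) (j : Fin n) :
    Cand.z i j ∈ pvoteFree idx ↔ idx = zFirstVote X' i j ∨ idx = zLastVote X' i j := by
  unfold zFirstVote zLastVote
  split_ifs <;> cases idx <;> simp [pvoteFree, eq_comm]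

def freeLevel : Idx m n k → ℕ
  | .vij i _ => if i ∈ X' then 5 else 0
  | .wij i _ => if i ∈ X' then 0 else 5
  | _ => 0

theorem freeLevel_zFirstVote (i : Fin m) (j : Fin n) :
    freeLevel X' (zFirstVote X' i j : Idx m n k) = 0 := by
  unfold zFirstVote
  split_ifs with h <;> simp [freeLevel, h]

theorem freeLevel_zLastVote (i : Fin m) (j : Fin n) :
    freeLevel X' (zLastVote X' i j : Idx m n k) = 5 := by
  unfold zLastVote
  split_ifs with h <;> simp [freeLevel, h]

/-- Levels, from first to last: `0` the free `z_i^j` when it goes first, `1` the top tier,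
`2` the candidate `c`, `3` the rest, `4` the bottom tier, `5` the free `z_i^j` when it goes
last. -/
def level (idx : Idx m n k) (d : Cand m n) : ℕ :=
  if d ∈ pvoteFree idx then freeLevel X' idx else tierLevel (pvoteTop S idx) (pvoteBot hn idx) .c d

theorem level_of_notMem_pvoteFree {idx : Idx m n k} {d : Cand m n} (hd : d ∉ pvoteFree idx) :
    level hn S X' idx d = tierLevel (pvoteTop S idx) (pvoteBot hn idx) .c d := by
  simp [level, hd]

theorem level_c (idx : Idx m n k) : level hn S X' idx .c = 2 := by
  cases idx <;> simp [level, tierLevel, pvoteFree, pvoteTop]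

theorem level_z (idx : Idx m n k) (i : Fin m) (j : Fin n) :
    level hn S X' idx (.z i j) =
      if idx = zFirstVote X' i j then 0 else if idx = zLastVote X' i j then 5 else 3 := by
  simp only [level, tierLevel, z_notMem_pvoteTop, z_notMem_pvoteBot, reduceCtorEq, if_false,
    z_mem_pvoteFree_iff X']
  by_cases h₁ : idx = zFirstVote X' i j
  · simp [h₁, freeLevel_zFirstVote]
  by_cases h₂ : idx = zLastVote X' i j
  · simp [h₂, freeLevel_zLastVote, (zFirstVote_ne_zLastVote X' i j).symm]
  · simp [h₁, h₂]

theorem exists_level_eq_four (idx : Idx m n k) (i : Fin m) : ∃ b, level hn S X' idx b = 4 := by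
  cases idx with
  | one => exact ⟨.x i, by simp [level, tierLevel, pvoteFree, pvoteTop, pvoteBot]⟩
  | v i' => exact ⟨.x i', by simp [level, tierLevel, pvoteFree, pvoteTop, pvoteBot]⟩
  | vij => exact ⟨.h, by simp [level, tierLevel, pvoteFree, pvoteTop, pvoteBot]⟩
  | wij i' j' =>
    by_cases hj : j'.val + 1 < n
    · exact ⟨.y i' ⟨j'.val + 1, hj⟩, by simp [level, tierLevel, pvoteFree, pvoteTop, pvoteBot, hj]⟩
    · exact ⟨.h, by simp [level, tierLevel, pvoteFree, pvoteTop, pvoteBot, hj]⟩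
  | t => exact ⟨.h, by simp [level, tierLevel, pvoteFree, pvoteTop, pvoteBot]⟩

variable (i : Fin m) (j : Fin n)

theorem level_zFirstVote_z_lt {b : Cand m n} (hb : b ≠ .z i j) :
    level hn S X' (zFirstVote X' i j : Idx m n k) (.z i j) <
      level hn S X' (zFirstVote X' i j : Idx m n k) b := by
  have hbfree : b ∉ pvoteFree (zFirstVote X' i j : Idx m n k) := fun h =>
    hb (eq_of_mem_pvoteFree h ((z_mem_pvoteFree_iff X' _ i j).2 (Or.inl rfl)))
  rw [level_z, if_pos rfl, level_of_notMem_pvoteFree hn S X' hbfree]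
  exact (Finset.mem_Icc.1 (tierLevel_mem_Icc ..)).1

theorem level_zLastVote_lt_z {b : Cand m n} (hb : b ≠ .z i j) :
    level hn S X' (zLastVote X' i j : Idx m n k) b <
      level hn S X' (zLastVote X' i j : Idx m n k) (.z i j) := by
  have hbfree : b ∉ pvoteFree (zLastVote X' i j : Idx m n k) := fun h =>
    hb (eq_of_mem_pvoteFree h ((z_mem_pvoteFree_iff X' _ i j).2 (Or.inr rfl)))
  rw [level_z, if_neg (zFirstVote_ne_zLastVote X' i j).symm, if_pos rfl,
    level_of_notMem_pvoteFree hn S X' hbfree]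
  exact Nat.lt_succ_of_le (Finset.mem_Icc.1 (tierLevel_mem_Icc ..)).2

theorem level_c_lt_z {idx : Idx m n k} (h : idx ≠ zFirstVote X' i j) :
    level hn S X' idx .c < level hn S X' idx (.z i j) := by
  rw [level_c, level_z, if_neg h]
  split_ifs <;> norm_num

theorem exists_level_z_lt {idx : Idx m n k} (h : idx ≠ zLastVote X' i j) :
    ∃ b, level hn S X' idx (.z i j) < level hn S X' idx b := by
  obtain ⟨b, hb⟩ := exists_level_eq_four hn S X' idx i
  refine ⟨b, ?_⟩
  rw [hb, level_z, if_neg h]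
  split_ifs <;> norm_num

noncomputable def extension : Idx m n k → Ranking m n :=
  fun idx => lexRank (level hn S X' idx)

theorem extendsRed_extension : ExtendsRed m n k hn S (extension hn S X') := by
  intro idx a b h
  rw [pvote_eq_tierE] at h
  apply lexRank_lt_of_lt
  rw [level_of_notMem_pvoteFree hn S X' h.1, level_of_notMem_pvoteFree hn S X' h.2.1]
  exact tierLevel_lt_of_tierE (disjoint_pvoteTop_pvoteBot hn S idx) (c_notMem_pvoteBot hn idx) h

theorem extension_z_eq_zero_iff (idx : Idx m n k) :
    (extension hn S X' idx (.z i j)).val = 0 ↔ idx = zFirstVote X' i j := by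
  rw [val_eq_zero_iff_forall_lt]
  refine ⟨fun h => ?_, fun h b hb => ?_⟩
  · by_contra hne
    exact (h .c (by simp)).asymm (lexRank_lt_of_lt _ (level_c_lt_z hn S X' i j hne))
  · subst h
    exact lexRank_lt_of_lt _ (level_zFirstVote_z_lt hn S X' i j hb)

theorem extension_z_eq_last_iff (idx : Idx m n k) :
    (extension hn S X' idx (.z i j)).val = Fintype.card (Cand m n) - 1 ↔
      idx = zLastVote X' i j := by
  rw [val_eq_last_iff_forall_lt]
  refine ⟨fun h => ?_, fun h b hb => ?_⟩
  · by_contra hne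
    obtain ⟨b, hb⟩ := exists_level_z_lt hn S X' i j hne
    have hbz : b ≠ .z i j := by rintro rfl; exact lt_irrefl _ hb
    exact (h b hbz).asymm (lexRank_lt_of_lt _ hb)
  · subst h
    exact lexRank_lt_of_lt _ (level_zLastVote_lt_z hn S X' i j hb)

end Extension

theorem z_receives_exactly_Vp_points_general
    (m n k : ℕ) (hn : 0 < n) (S : Fin n → Finset (Fin m))
    (X' : Finset (Fin m)) :
    ∃ Ext : Idx m n k → Ranking m n,
      ExtendsRed m n k hn S Ext ∧
      ∀ (i : Fin m) (j : Fin n),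
        pScore Ext (Cand.z i j) = Fintype.card (Idx m n k) ∧
        firstCnt Ext (Cand.z i j) = 1 ∧
        lastCnt Ext (Cand.z i j) = 1 ∧
        (i ∈ X' →
          (Ext (Idx.wij i j) (Cand.z i j)).val = 0 ∧
          (Ext (Idx.vij i j) (Cand.z i j)).val = Fintype.card (Cand m n) - 1) ∧
        (i ∉ X' →
          (Ext (Idx.vij i j) (Cand.z i j)).val = 0 ∧
          (Ext (Idx.wij i j) (Cand.z i j)).val = Fintype.card (Cand m n) - 1) := by
  refine ⟨extension hn S X', extendsRed_extension hn S X', fun i j => ?_⟩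
  have hfirst := extension_z_eq_zero_iff (k := k) hn S X' i j
  have hlast := extension_z_eq_last_iff (k := k) hn S X' i j
  refine ⟨sum_pts_eq_card _ (zFirstVote_ne_zLastVote X' i j) hfirst hlast, ?_, ?_,
    fun hi => ?_, fun hi => ?_⟩
  · simp [firstCnt, hfirst, Finset.filter_eq']
  · simp [lastCnt, hlast, Finset.filter_eq']
  · simp [hfirst, hlast, zFirstVote, zLastVote, hi]
  · simp [hfirst, hlast, zFirstVote, zLastVote, hi]

/-- Forward direction of the reduction: given a hitting set `X'` of size at
most `k`, there is an extension of the partial votes in which every `z_i^j`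
takes exactly one first and one last position (first in `w_i^j` and last in
`v_i^j` when `e_i ∈ X'`, first in `v_i^j` and last in `w_i^j` otherwise) and
middle positions elsewhere, hence receives exactly `|V^p|` points. -/
theorem z_receives_exactly_Vp_points
    (m n k : ℕ) (hn : 0 < n) (S : Fin n → Finset (Fin m))
    (hS : ∀ j, (S j).Nonempty)
    (X' : Finset (Fin m)) (hXk : X'.card ≤ k)
    (hhit : ∀ j, (X' ∩ S j).Nonempty) :
    ∃ Ext : Idx m n k → Ranking m n,
      ExtendsRed m n k hn S Ext ∧
      ∀ (i : Fin m) (j : Fin n),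
        pScore Ext (Cand.z i j) = Fintype.card (Idx m n k) ∧
        firstCnt Ext (Cand.z i j) = 1 ∧
        lastCnt Ext (Cand.z i j) = 1 ∧
        (i ∈ X' →
          (Ext (Idx.wij i j) (Cand.z i j)).val = 0 ∧
          (Ext (Idx.vij i j) (Cand.z i j)).val = Fintype.card (Cand m n) - 1) ∧
        (i ∉ X' →
          (Ext (Idx.vij i j) (Cand.z i j)).val = 0 ∧
          (Ext (Idx.wij i j) (Cand.z i j)).val = Fintype.card (Cand m n) - 1) :=
  z_receives_exactly_Vp_points_general m n k hn S X'
end
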